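/- arXiv:2104.09004 — 2 statements merged into one kernel-verified Lean document; each statement's English description precedes it below -/
import Mathlib

section
/- For every integer n ≥ 1, the IR(G_n)-sets are precisely the following 4n + 2 sets: X = C ∪ D ∪ {u}; X_i = (X − {c_i}) ∪ {a_i} for i = 1,...,n; X_i' = (X − {d_i}) ∪ {a_i} for i = 1,...,n; Y = C ∪ D ∪ {v}; Y_i = (Y − {c_i}) ∪ {b_i} for i = 1,...,n; and Y_i' = (Y − {d_i}) ∪ {b_i} for i = 1,...,n. -/
open SimpleGraph

section IRDefs

variable {V : Type*}

/-- `w` is a `D`-private neighbour of `v`: `w` is dominated by `v` but by no other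
vertex of `D`. -/
def IsPrivateNbr (G : SimpleGraph V) (D : Set V) (v w : V) : Prop :=
  (w = v ∨ G.Adj v w) ∧ ∀ u ∈ D, u ≠ v → ¬(w = u ∨ G.Adj u w)

/-- The set `PN(v, D)` of `D`-private neighbours of `v`. -/
def PN (G : SimpleGraph V) (v : V) (D : Set V) : Set V := {w | IsPrivateNbr G D v w}

/-- The set `EPN(v, D) = PN(v, D) − D` of external `D`-private neighbours of `v`. -/
def EPN (G : SimpleGraph V) (v : V) (D : Set V) : Set V := PN G v D \ D

/-- A set `D` is irredundant if every vertex of `D` has a `D`-private neighbour. -/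
def Irredundant (G : SimpleGraph V) (D : Set V) : Prop := ∀ v ∈ D, (PN G v D).Nonempty

/-- The upper irredundance number `IR(G)`. -/
noncomputable def IRnum (G : SimpleGraph V) : ℕ :=
  sSup {n | ∃ D : Set V, Irredundant G D ∧ D.ncard = n}

/-- An `IR(G)`-set: an irredundant set of maximum cardinality `IR(G)`. -/
def IsIRSet (G : SimpleGraph V) (D : Set V) : Prop :=
  Irredundant G D ∧ D.ncard = IRnum G

/-- The `IR`-graph of `G`: vertices are the `IR(G)`-sets, and `D` is adjacent to `D'`
iff `D' = (D − {u}) ∪ {v}` for some `u ∈ D` and `v ∈ D' − {u}` with `uv ∈ E(G)`. -/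
def IRGraph (G : SimpleGraph V) [Fintype V] :
    SimpleGraph {D : Set V // IsIRSet G D} where
  Adj D D' := ∃ a b, a ∈ D.1 ∧ b ∈ D'.1 ∧ b ≠ a ∧ G.Adj a b ∧ D'.1 = (D.1 \ {a}) ∪ {b}
  symm := by
    constructor
    rintro ⟨D, hD⟩ ⟨D', hD'⟩ ⟨a, b, ha, hb, hba, hadj, heq⟩
    dsimp only at ha hb heq ⊢
    have hbD : b ∉ D := by
      intro hbD
      have h1 : D' = D \ {a} := by
        rw [heq]
        ext x
        simp only [Set.mem_union, Set.mem_diff, Set.mem_singleton_iff]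
        constructor
        · rintro (h | rfl)
          · exact h
          · exact ⟨hbD, hba⟩
        · exact Or.inl
      have h2 : D'.ncard = D.ncard - 1 := by
        rw [h1, Set.ncard_diff_singleton_of_mem ha]
      have h3 : D.ncard = D'.ncard := by rw [hD.2, hD'.2]
      have h4 : 0 < D.ncard := (Set.ncard_pos (Set.toFinite D)).2 ⟨a, ha⟩
      omega
    refine ⟨b, a, hb, ha, fun h => hba h.symm, hadj.symm, ?_⟩
    rw [heq]
    ext x
    simp only [Set.mem_union, Set.mem_diff, Set.mem_singleton_iff]
    constructor
    · intro hx
      by_cases hxa : x = a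
      · exact Or.inr hxa
      · have hxb : x ≠ b := fun h => hbD (h ▸ hx)
        exact Or.inl ⟨Or.inl ⟨hx, hxa⟩, hxb⟩
    · rintro (⟨(⟨hx, _⟩ | rfl), hxb⟩ | rfl)
      · exact hx
      · exact absurd rfl hxb
      · exact ha
  loopless := by
    constructor
    rintro ⟨D, hD⟩ ⟨a, b, ha, hb, hba, hadj, heq⟩
    dsimp only at ha hb heq
    have h2 : a ∈ (D \ {a}) ∪ {b} := heq ▸ ha
    rcases h2 with h | h
    · exact h.2 rfl
    · exact hba h.symm

end IRDefs

/-- The vertices of the graph `Gₙ`. -/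
inductive GVert (n : ℕ) : Type
  | u : GVert n
  | v : GVert n
  | a : Fin n → GVert n
  | b : Fin n → GVert n
  | c : Fin n → GVert n
  | d : Fin n → GVert n
  deriving DecidableEq, Fintype

/-- The graph `Gₙ`: edges `uv`, `u aᵢ` for all `i`, `v bᵢ` for all `i`,
`aᵢ bⱼ` for all `i ≠ j`, and, for each `i`, the 4-cycle `(aᵢ, cᵢ, bᵢ, dᵢ, aᵢ)`. -/
def Gn (n : ℕ) : SimpleGraph (GVert n) :=
  SimpleGraph.fromRel (fun x y =>
    (x = .u ∧ y = .v) ∨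
    (∃ i, x = .u ∧ y = .a i) ∨
    (∃ i, x = .v ∧ y = .b i) ∨
    (∃ i j, i ≠ j ∧ x = .a i ∧ y = .b j) ∨
    (∃ i, x = .a i ∧ y = .c i) ∨
    (∃ i, x = .c i ∧ y = .b i) ∨
    (∃ i, x = .b i ∧ y = .d i) ∨
    (∃ i, x = .d i ∧ y = .a i))

/-- `Sᵢ = {aᵢ, bᵢ, cᵢ, dᵢ}`. -/
def Sset (n : ℕ) (i : Fin n) : Set (GVert n) := {.a i, .b i, .c i, .d i}

/-- `C ∪ D`. -/
def CDset (n : ℕ) : Set (GVert n) := {x | ∃ i, x = GVert.c i ∨ x = GVert.d i}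

/-- `X = C ∪ D ∪ {u}`. -/
def Xbase (n : ℕ) : Set (GVert n) := CDset n ∪ {GVert.u}

/-- `Y = C ∪ D ∪ {v}`. -/
def Ybase (n : ℕ) : Set (GVert n) := CDset n ∪ {GVert.v}

/-- `Xᵢ = (X − {cᵢ}) ∪ {aᵢ}`. -/
def XiSet (n : ℕ) (i : Fin n) : Set (GVert n) := (Xbase n \ {GVert.c i}) ∪ {GVert.a i}

/-- `Xᵢ' = (X − {dᵢ}) ∪ {aᵢ}`. -/
def XiSet' (n : ℕ) (i : Fin n) : Set (GVert n) := (Xbase n \ {GVert.d i}) ∪ {GVert.a i}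

/-- `Yᵢ = (Y − {cᵢ}) ∪ {bᵢ}`. -/
def YiSet (n : ℕ) (i : Fin n) : Set (GVert n) := (Ybase n \ {GVert.c i}) ∪ {GVert.b i}

/-- `Yᵢ' = (Y − {dᵢ}) ∪ {bᵢ}`. -/
def YiSet' (n : ℕ) (i : Fin n) : Set (GVert n) := (Ybase n \ {GVert.d i}) ∪ {GVert.b i}

/-!
An irredundant set `D` meets each block `Sᵢ = {aᵢ, bᵢ, cᵢ, dᵢ}` in at most two vertices, since
a third one would leave `cᵢ` or `dᵢ` without a private neighbour. If `D` contains both `u` and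
`v`, their private neighbours are some `aᵢ` and `bₖ`, and the blocks `Sᵢ`, `Sₖ` lose two
vertices between them. Hence `IR(Gₙ) = 2n + 1`, attained by `X`, and an `IR`-set contains exactly
one of `u`, `v` and two vertices of every block. Up to the automorphism `u ↔ v`, `aᵢ ↔ bᵢ` it
contains `u`. The private neighbour of `u` is then `u` or `v`, which rules out all `aⱼ` or all
`bⱼ`, and the private neighbours of the `cⱼ`, `dⱼ` leave room for no `bⱼ` and at most one `aᵢ`.
This leaves `X`, `Xᵢ` and `Xᵢ'`.
-/

open GVert

section Irredundance

variable {V W : Type*} {G : SimpleGraph V} {H : SimpleGraph W}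

def Dominates (G : SimpleGraph V) (x w : V) : Prop := w = x ∨ G.Adj x w

lemma dominates_comm {x w : V} : Dominates G x w ↔ Dominates G w x := by
  simp only [Dominates, eq_comm, G.adj_comm]

lemma isPrivateNbr_iff {D : Set V} {x w : V} :
    IsPrivateNbr G D x w ↔ Dominates G x w ∧ ∀ y, Dominates G y w → y ∈ D → y = x := by
  refine and_congr_right fun _ => forall_congr' fun y => ?_
  unfold Dominates
  tauto

lemma irredundant_iff {D : Set V} :
    Irredundant G D ↔ ∀ x ∈ D, ∃ w, Dominates G x w ∧ ∀ y, Dominates G y w → y ∈ D → y = x := by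
  simp only [Irredundant, PN, Set.Nonempty, Set.mem_ofPred_eq, isPrivateNbr_iff]

lemma SimpleGraph.Iso.dominates_iff (e : G ≃g H) {x w : V} :
    Dominates H (e x) (e w) ↔ Dominates G x w := by
  simp only [Dominates, e.injective.eq_iff, e.map_adj_iff]

lemma Irredundant.preimage_iso {D : Set W} (hD : Irredundant H D) (e : G ≃g H) :
    Irredundant G (e ⁻¹' D) := by
  rw [irredundant_iff] at hD ⊢
  intro x hx
  obtain ⟨w, hxw, hw⟩ := hD (e x) hx
  refine ⟨e.symm w, ?_, fun y hyw hy => e.injective (hw _ ?_ hy)⟩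
  · rwa [← e.dominates_iff, e.apply_symm_apply]
  · rwa [← e.dominates_iff, e.apply_symm_apply] at hyw

lemma IRnum_eq {D : Set V} {k : ℕ} (hD : Irredundant G D) (hcard : D.ncard = k)
    (hle : ∀ E : Set V, Irredundant G E → E.ncard ≤ k) : IRnum G = k :=
  IsGreatest.csSup_eq ⟨⟨D, hD, hcard⟩, by rintro _ ⟨E, hE, rfl⟩; exact hle E hE⟩

end Irredundance

lemma sum_le_sum_add_card_compl_mul {ι : Type*} [Fintype ι] [DecidableEq ι] {f : ι → ℕ} {b : ℕ}
    (hf : ∀ i, f i ≤ b) (s : Finset ι) :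
    ∑ i, f i ≤ ∑ i ∈ s, f i + (Fintype.card ι - s.card) * b := by
  rw [← Finset.sum_add_sum_compl s f, ← Finset.card_compl, ← smul_eq_mul]
  gcongr
  exact Finset.sum_le_card_nsmul _ _ _ fun i _ => hf i

namespace Gn

variable {n : ℕ} {D : Set (GVert n)} {i : Fin n} {y : GVert n}

attribute [local simp] Xbase Ybase CDset XiSet XiSet' YiSet YiSet'

@[simp] lemma dominates_u_iff : Dominates (Gn n) y u ↔ y = u ∨ y = v ∨ ∃ j, a j = y := by
  cases y <;> simp [Dominates, Gn, eq_comm]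

@[simp] lemma dominates_v_iff : Dominates (Gn n) y v ↔ y = v ∨ y = u ∨ ∃ j, b j = y := by
  cases y <;> simp [Dominates, Gn, eq_comm]

@[simp] lemma dominates_a_iff :
    Dominates (Gn n) y (a i) ↔ y = a i ∨ y = u ∨ y = c i ∨ y = d i ∨ ∃ j ≠ i, b j = y := by
  cases y <;> simp [Dominates, Gn, eq_comm]

@[simp] lemma dominates_b_iff :
    Dominates (Gn n) y (b i) ↔ y = b i ∨ y = v ∨ y = c i ∨ y = d i ∨ ∃ j ≠ i, a j = y := by
  cases y <;> simp [Dominates, Gn, eq_comm]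

@[simp] lemma dominates_c_iff : Dominates (Gn n) y (c i) ↔ y = c i ∨ y = a i ∨ y = b i := by
  cases y <;> simp [Dominates, Gn, eq_comm]

@[simp] lemma dominates_d_iff : Dominates (Gn n) y (d i) ↔ y = d i ∨ y = a i ∨ y = b i := by
  cases y <;> simp [Dominates, Gn, eq_comm]

/-- The three cases: the private neighbour of `u` is `u`, `v` or some `aᵢ`. -/
lemma cases_of_u_mem (hD : Irredundant (Gn n) D) (hu : u ∈ D) :
    (v ∉ D ∧ ∀ j, a j ∉ D) ∨ (v ∉ D ∧ ∀ j, b j ∉ D) ∨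
      ∃ i, a i ∉ D ∧ c i ∉ D ∧ d i ∉ D ∧ ∀ j ≠ i, b j ∉ D := by
  obtain ⟨w, huw, hw⟩ := irredundant_iff.mp hD u hu
  rw [dominates_comm, dominates_u_iff] at huw
  rcases huw with rfl | rfl | ⟨i, rfl⟩
  · simp_all
  · simp_all
  · exact .inr (.inr ⟨i, by simpa using hw⟩)

/-- The three cases: the private neighbour of `cᵢ` is `cᵢ`, `aᵢ` or `bᵢ`. -/
lemma cases_of_c_mem (hD : Irredundant (Gn n) D) (hc : c i ∈ D) :
    (a i ∉ D ∧ b i ∉ D) ∨ (u ∉ D ∧ a i ∉ D ∧ d i ∉ D ∧ ∀ j ≠ i, b j ∉ D) ∨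
      (v ∉ D ∧ b i ∉ D ∧ d i ∉ D ∧ ∀ j ≠ i, a j ∉ D) := by
  obtain ⟨w, hcw, hw⟩ := irredundant_iff.mp hD _ hc
  rw [dominates_comm, dominates_c_iff] at hcw
  rcases hcw with rfl | rfl | rfl <;>
    simp_all

lemma cases_of_d_mem (hD : Irredundant (Gn n) D) (hd : d i ∈ D) :
    (a i ∉ D ∧ b i ∉ D) ∨ (u ∉ D ∧ a i ∉ D ∧ c i ∉ D ∧ ∀ j ≠ i, b j ∉ D) ∨
      (v ∉ D ∧ b i ∉ D ∧ c i ∉ D ∧ ∀ j ≠ i, a j ∉ D) := by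
  obtain ⟨w, hdw, hw⟩ := irredundant_iff.mp hD _ hd
  rw [dominates_comm, dominates_d_iff] at hdw
  rcases hdw with rfl | rfl | rfl <;>
    simp_all

def swapUV : Gn n ≃g Gn n :=
  let σ : GVert n → GVert n
    | u => v | v => u | a i => b i | b i => a i | c i => c i | d i => d i
  have hσ : Function.Involutive σ := by rintro (_ | _ | _ | _ | _ | _) <;> rfl
  { hσ.toPerm σ with
    map_rel_iff' := by
      rintro (_ | _ | _ | _ | _ | _) (_ | _ | _ | _ | _ | _) <;> simp [σ, Gn, eq_comm] }

@[simp] lemma swapUV_u : swapUV (u : GVert n) = v := rfl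
@[simp] lemma swapUV_v : swapUV (v : GVert n) = u := rfl
@[simp] lemma swapUV_a : swapUV (a i) = b i := rfl
@[simp] lemma swapUV_b : swapUV (b i) = a i := rfl
@[simp] lemma swapUV_c : swapUV (c i) = c i := rfl
@[simp] lemma swapUV_d : swapUV (d i) = d i := rfl

lemma swapUV_involutive : Function.Involutive (swapUV (n := n)) := by
  rintro (_ | _ | _ | _ | _ | _) <;> rfl

lemma ncard_preimage_swapUV (D : Set (GVert n)) : (swapUV ⁻¹' D).ncard = D.ncard :=
  Set.ncard_preimage_of_injective_subset_range swapUV.injective (by simp)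

open Classical in
/-- `|D ∩ Sᵢ|`, as a sum of indicators so that `split_ifs` and `omega` can work with it. -/
noncomputable def blockCard (D : Set (GVert n)) (i : Fin n) : ℕ :=
  (if a i ∈ D then 1 else 0) + (if b i ∈ D then 1 else 0) +
    (if c i ∈ D then 1 else 0) + (if d i ∈ D then 1 else 0)

open Classical in
noncomputable def hubCard (D : Set (GVert n)) : ℕ :=
  (if u ∈ D then 1 else 0) + (if v ∈ D then 1 else 0)

def equivBlocks : GVert n ≃ (Fin n × Fin 4) ⊕ Fin 2 where
  toFun
    | u => .inr 0 | v => .inr 1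
    | a i => .inl (i, 0) | b i => .inl (i, 1) | c i => .inl (i, 2) | d i => .inl (i, 3)
  invFun
    | .inl (i, j) => ![a i, b i, c i, d i] j
    | .inr j => ![u, v] j
  left_inv x := by cases x <;> rfl
  right_inv x := by rcases x with ⟨i, j⟩ | j <;> fin_cases j <;> rfl

lemma ncard_eq_hubCard_add_sum_blockCard (D : Set (GVert n)) :
    D.ncard = hubCard D + ∑ i, blockCard D i := by
  classical
  rw [← Nat.card_coe_set_eq, Nat.card_eq_fintype_card, Fintype.card_subtype, Finset.card_filter,
    ← equivBlocks.symm.sum_comp, Fintype.sum_sum_type, Fintype.sum_prod_type]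
  simp only [Fin.sum_univ_four, Fin.sum_univ_two]
  exact add_comm _ _

lemma blockCard_le_two (hD : Irredundant (Gn n) D) (i : Fin n) : blockCard D i ≤ 2 := by
  unfold blockCard
  by_cases hc : c i ∈ D
  · rcases cases_of_c_mem hD hc with ⟨ha, hb⟩ | ⟨-, ha, hd, -⟩ | ⟨-, hb, hd, -⟩ <;>
      split_ifs <;> simp_all
  by_cases hd : d i ∈ D
  · rcases cases_of_d_mem hD hd with ⟨ha, hb⟩ | ⟨-, ha, -, -⟩ | ⟨-, hb, -, -⟩ <;>
      split_ifs <;> simp_all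
  split_ifs <;> simp_all

lemma sum_blockCard_le (hD : Irredundant (Gn n) D) : ∑ i, blockCard D i ≤ 2 * n := by
  simpa [mul_comm] using sum_le_sum_add_card_compl_mul (blockCard_le_two hD) ∅

/-- The private neighbours of `u` and `v` are then some `aᵢ` and `bₖ`, which empties
`D ∩ Sᵢ` of everything but `bᵢ` and `D ∩ Sₖ` of everything but `aₖ`. -/
lemma sum_blockCard_add_two_le (hD : Irredundant (Gn n) D) (hu : u ∈ D) (hv : v ∈ D) :
    ∑ i, blockCard D i + 2 ≤ 2 * n := by
  obtain ⟨i, hai, hci, hdi, -⟩ : ∃ i, a i ∉ D ∧ c i ∉ D ∧ d i ∉ D ∧ ∀ j ≠ i, b j ∉ D := by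
    rcases cases_of_u_mem hD hu with ⟨hv', -⟩ | ⟨hv', -⟩ | h
    exacts [absurd hv hv', absurd hv hv', h]
  obtain ⟨k, hbk, hck, hdk, -⟩ : ∃ k, b k ∉ D ∧ c k ∉ D ∧ d k ∉ D ∧ ∀ j ≠ k, a j ∉ D := by
    rcases cases_of_u_mem (hD.preimage_iso swapUV) (by simpa using hv) with
      ⟨hu', -⟩ | ⟨hu', -⟩ | h
    exacts [absurd hu (by simpa using hu'), absurd hu (by simpa using hu'), by simpa using h]
  have hle := sum_le_sum_add_card_compl_mul (blockCard_le_two hD) {i, k}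
  have hcard := Finset.card_le_univ ({i, k} : Finset (Fin n))
  simp only [Fintype.card_fin] at hle hcard
  by_cases hik : i = k
  · subst hik
    have hi : blockCard D i = 0 := by simp [blockCard, hai, hbk, hci, hdi]
    simp only [Finset.pair_eq_singleton, Finset.sum_singleton, Finset.card_singleton, hi] at hle
    have := i.pos
    omega
  · have hi : blockCard D i ≤ 1 := by unfold blockCard; split_ifs <;> simp_all
    have hk : blockCard D k ≤ 1 := by unfold blockCard; split_ifs <;> simp_all
    rw [Finset.sum_pair hik, Finset.card_pair hik] at hle
    rw [Finset.card_pair hik] at hcard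
    omega

lemma irredundant_Xbase : Irredundant (Gn n) (Xbase n) := by
  rw [irredundant_iff]
  rintro (_ | _ | j | j | j | j) hx <;> simp at hx
  · exact ⟨v, by simp, by simp⟩
  · exact ⟨c j, Or.inl rfl, by simp⟩
  · exact ⟨d j, Or.inl rfl, by simp⟩

lemma irredundant_XiSet (i : Fin n) : Irredundant (Gn n) (XiSet n i) := by
  rw [irredundant_iff]
  rintro (_ | _ | j | j | j | j) hx <;> simp at hx
  · exact ⟨v, by simp, by simp⟩
  · subst hx
    exact ⟨c j, by simp, by simp⟩
  · exact ⟨c j, Or.inl rfl, by simp [hx]⟩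
  · by_cases hj : j = i
    · subst hj
      exact ⟨b j, by simp, by simp⟩
    · exact ⟨d j, Or.inl rfl, by simp [hj]⟩

lemma irredundant_XiSet' (i : Fin n) : Irredundant (Gn n) (XiSet' n i) := by
  rw [irredundant_iff]
  rintro (_ | _ | j | j | j | j) hx <;> simp at hx
  · exact ⟨v, by simp, by simp⟩
  · subst hx
    exact ⟨d j, by simp, by simp⟩
  · by_cases hj : j = i
    · subst hj
      exact ⟨b j, by simp, by simp⟩
    · exact ⟨c j, Or.inl rfl, by simp [hj]⟩
  · exact ⟨d j, Or.inl rfl, by simp [hx]⟩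

/-- `irSet (s, o)` is `X` for `s = false` and `Y` for `s = true`, modified in the block
`Sᵢ` when `o = some (i, t)`: `cᵢ` (for `t = false`) or `dᵢ` (for `t = true`) is replaced by
`aᵢ`, resp. `bᵢ`. -/
def irSet : Bool × Option (Fin n × Bool) → Set (GVert n)
  | (false, none) => Xbase n
  | (false, some (i, false)) => XiSet n i
  | (false, some (i, true)) => XiSet' n i
  | (true, none) => Ybase n
  | (true, some (i, false)) => YiSet n i
  | (true, some (i, true)) => YiSet' n i

lemma preimage_swapUV_irSet (o : Option (Fin n × Bool)) :
    swapUV ⁻¹' irSet (false, o) = irSet (true, o) := by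
  ext x
  rcases o with _ | ⟨i, _ | _⟩ <;> cases x <;> simp [irSet]

lemma irredundant_irSet (p : Bool × Option (Fin n × Bool)) : Irredundant (Gn n) (irSet p) := by
  have hX (o : Option (Fin n × Bool)) : Irredundant (Gn n) (irSet (false, o)) := by
    rcases o with _ | ⟨i, _ | _⟩
    exacts [irredundant_Xbase, irredundant_XiSet i, irredundant_XiSet' i]
  obtain ⟨_ | _, o⟩ := p
  · exact hX o
  · rw [← preimage_swapUV_irSet]
    exact (hX o).preimage_iso swapUV

lemma ncard_irSet (p : Bool × Option (Fin n × Bool)) : (irSet p).ncard = 2 * n + 1 := by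
  have hX (o : Option (Fin n × Bool)) : (irSet (false, o)).ncard = 2 * n + 1 := by
    have hhub : hubCard (irSet (false, o)) = 1 := by
      rcases o with _ | ⟨i, _ | _⟩ <;> simp [hubCard, irSet]
    have hblock (j : Fin n) : blockCard (irSet (false, o)) j = 2 := by
      unfold blockCard
      rcases o with _ | ⟨i, _ | _⟩ <;> split_ifs <;> simp_all [irSet]
    simp [ncard_eq_hubCard_add_sum_blockCard, hhub, hblock, add_comm, mul_comm]
  obtain ⟨_ | _, o⟩ := p
  · exact hX o
  · rw [← preimage_swapUV_irSet, ncard_preimage_swapUV, hX o]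

lemma two_mul_hubCard_add_sum_blockCard_le (hD : Irredundant (Gn n) D) :
    2 * hubCard D + ∑ i, blockCard D i ≤ 2 * n + 2 := by
  have := sum_blockCard_le hD
  by_cases huv : u ∈ D ∧ v ∈ D
  · have := sum_blockCard_add_two_le hD huv.1 huv.2
    have : hubCard D = 2 := by simp [hubCard, huv.1, huv.2]
    omega
  · have : hubCard D ≤ 1 := by unfold hubCard; split_ifs <;> tauto
    omega

lemma ncard_le (hD : Irredundant (Gn n) D) : D.ncard ≤ 2 * n + 1 := by
  have := sum_blockCard_le hD
  have := two_mul_hubCard_add_sum_blockCard_le hD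
  rw [ncard_eq_hubCard_add_sum_blockCard]
  omega

lemma IRnum_Gn : IRnum (Gn n) = 2 * n + 1 :=
  IRnum_eq (irredundant_irSet (false, none)) (ncard_irSet _) fun _ => ncard_le

lemma hubCard_eq_one (hD : Irredundant (Gn n) D) (hcard : D.ncard = 2 * n + 1) :
    hubCard D = 1 := by
  have := sum_blockCard_le hD
  have := two_mul_hubCard_add_sum_blockCard_le hD
  rw [ncard_eq_hubCard_add_sum_blockCard] at hcard
  omega

lemma v_mem_iff_u_not_mem (hD : Irredundant (Gn n) D) (hcard : D.ncard = 2 * n + 1) :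
    v ∈ D ↔ u ∉ D := by
  have := hubCard_eq_one hD hcard
  unfold hubCard at this
  split_ifs at this <;> simp_all

lemma blockCard_eq_two (hD : Irredundant (Gn n) D) (hcard : D.ncard = 2 * n + 1) (i : Fin n) :
    blockCard D i = 2 := by
  have := hubCard_eq_one hD hcard
  have := blockCard_le_two hD i
  have hle := sum_le_sum_add_card_compl_mul (blockCard_le_two hD) {i}
  have := i.pos
  rw [ncard_eq_hubCard_add_sum_blockCard] at hcard
  simp only [Finset.sum_singleton, Finset.card_singleton, Fintype.card_fin] at hle
  omega

lemma c_mem_or_d_mem (h : blockCard D i = 2) (hab : a i ∉ D ∨ b i ∉ D) : c i ∈ D ∨ d i ∈ D := by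
  by_contra! hcd
  unfold blockCard at h
  split_ifs at h <;> simp_all

lemma subset_Xbase (hv : v ∉ D) (ha : ∀ j, a j ∉ D) (hb : ∀ j, b j ∉ D) : D ⊆ Xbase n := by
  rintro (_ | _ | j | j | j | j) hx <;> simp_all

lemma subset_XiSet (hv : v ∉ D) (ha : ∀ j ≠ i, a j ∉ D) (hb : ∀ j, b j ∉ D) (hc : c i ∉ D) :
    D ⊆ XiSet n i := by
  rintro (_ | _ | j | j | j | j) hx
  · simp
  · exact absurd hx hv
  · have : j = i := not_not.mp fun hj => ha j hj hx
    simp [this]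
  · exact absurd hx (hb j)
  · have : j ≠ i := by rintro rfl; exact hc hx
    simp [this]
  · simp

lemma subset_XiSet' (hv : v ∉ D) (ha : ∀ j ≠ i, a j ∉ D) (hb : ∀ j, b j ∉ D) (hd : d i ∉ D) :
    D ⊆ XiSet' n i := by
  rintro (_ | _ | j | j | j | j) hx
  · simp
  · exact absurd hx hv
  · have : j = i := not_not.mp fun hj => ha j hj hx
    simp [this]
  · exact absurd hx (hb j)
  · simp
  · have : j ≠ i := by rintro rfl; exact hd hx
    simp [this]

lemma exists_eq_irSet_false (hD : Irredundant (Gn n) D) (hcard : D.ncard = 2 * n + 1)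
    (hu : u ∈ D) : ∃ o, D = irSet (false, o) := by
  have hv : v ∉ D := by simp [v_mem_iff_u_not_mem hD hcard, hu]
  have hblock := blockCard_eq_two hD hcard
  suffices ∃ o, D ⊆ irSet (false, o) by
    obtain ⟨o, ho⟩ := this
    exact ⟨o, Set.eq_of_subset_of_ncard_le ho (by rw [ncard_irSet, hcard]) (Set.toFinite _)⟩
  rcases cases_of_u_mem hD hu with ⟨-, ha⟩ | ⟨-, hb⟩ | ⟨i, hai, hci, hdi, -⟩
  · refine ⟨none, subset_Xbase hv ha fun j hbj => ?_⟩
    rcases c_mem_or_d_mem (hblock j) (.inl (ha j)) with hc | hd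
    · rcases cases_of_c_mem hD hc with ⟨-, hb⟩ | ⟨hu', -⟩ | ⟨-, hb, -⟩ <;> contradiction
    · rcases cases_of_d_mem hD hd with ⟨-, hb⟩ | ⟨hu', -⟩ | ⟨-, hb, -⟩ <;> contradiction
  · by_cases hA : ∃ i, a i ∈ D
    · obtain ⟨i, hai⟩ := hA
      rcases c_mem_or_d_mem (hblock i) (.inr (hb i)) with hc | hd
      · rcases cases_of_c_mem hD hc with ⟨ha, -⟩ | ⟨-, ha, -⟩ | ⟨-, -, hd, ha⟩
        exacts [absurd hai ha, absurd hai ha, ⟨some (i, true), subset_XiSet' hv ha hb hd⟩]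
      · rcases cases_of_d_mem hD hd with ⟨ha, -⟩ | ⟨-, ha, -⟩ | ⟨-, -, hc, ha⟩
        exacts [absurd hai ha, absurd hai ha, ⟨some (i, false), subset_XiSet hv ha hb hc⟩]
    · simp only [not_exists] at hA
      exact ⟨none, subset_Xbase hv hA hb⟩
  · exact ((c_mem_or_d_mem (hblock i) (.inl hai)).elim hci hdi).elim

lemma isIRSet_iff_mem_range_irSet (Z : Set (GVert n)) :
    IsIRSet (Gn n) Z ↔ Z ∈ Set.range irSet := by
  refine ⟨fun ⟨hZ, hcard⟩ => ?_, ?_⟩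
  · rw [IRnum_Gn] at hcard
    by_cases hu : u ∈ Z
    · obtain ⟨o, rfl⟩ := exists_eq_irSet_false hZ hcard hu
      exact ⟨_, rfl⟩
    · obtain ⟨o, ho⟩ := exists_eq_irSet_false (hZ.preimage_iso swapUV)
        (by rwa [ncard_preimage_swapUV]) (by simpa [v_mem_iff_u_not_mem hZ hcard] using hu)
      refine ⟨(true, o), ?_⟩
      rw [← preimage_swapUV_irSet, ← ho, ← Set.preimage_comp, swapUV_involutive.comp_self,
        Set.preimage_id]
  · rintro ⟨p, rfl⟩
    exact ⟨irredundant_irSet p, (ncard_irSet p).trans IRnum_Gn.symm⟩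

lemma v_mem_irSet (p : Bool × Option (Fin n × Bool)) : v ∈ irSet p ↔ p.1 = true := by
  rcases p with ⟨_ | _, _ | ⟨i, _ | _⟩⟩ <;> simp [irSet]

lemma c_mem_irSet (j : Fin n) (p : Bool × Option (Fin n × Bool)) :
    c j ∈ irSet p ↔ p.2 ≠ some (j, false) := by
  rcases p with ⟨_ | _, _ | ⟨i, _ | _⟩⟩ <;> simp [irSet, eq_comm]

lemma d_mem_irSet (j : Fin n) (p : Bool × Option (Fin n × Bool)) :
    d j ∈ irSet p ↔ p.2 ≠ some (j, true) := by
  rcases p with ⟨_ | _, _ | ⟨i, _ | _⟩⟩ <;> simp [irSet, eq_comm]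

lemma irSet_injective : Function.Injective (irSet (n := n)) := by
  have key {p q} (h : irSet p = irSet q) (x : Fin n × Bool) (hp : p.2 = some x) : q.2 = some x := by
    obtain ⟨j, _ | _⟩ := x
    · simpa [← h, c_mem_irSet, hp] using c_mem_irSet j q
    · simpa [← h, d_mem_irSet, hp] using d_mem_irSet j q
  intro p q h
  refine Prod.ext (Bool.eq_iff_iff.mpr ?_) (Option.ext fun x => ⟨key h x, key h.symm x⟩)
  rw [← v_mem_irSet, ← v_mem_irSet, h]

lemma mem_range_irSet_iff {Z : Set (GVert n)} :
    Z ∈ Set.range irSet ↔ Z = Xbase n ∨ Z = Ybase n ∨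
      ∃ i, Z = XiSet n i ∨ Z = XiSet' n i ∨ Z = YiSet n i ∨ Z = YiSet' n i := by
  constructor
  · rintro ⟨⟨_ | _, _ | ⟨i, _ | _⟩⟩, rfl⟩
    exacts [.inl rfl, .inr (.inr ⟨i, .inl rfl⟩), .inr (.inr ⟨i, .inr (.inl rfl)⟩), .inr (.inl rfl),
      .inr (.inr ⟨i, .inr (.inr (.inl rfl))⟩), .inr (.inr ⟨i, .inr (.inr (.inr rfl))⟩)]
  · rintro (rfl | rfl | ⟨i, rfl | rfl | rfl | rfl⟩)
    exacts [⟨(false, none), rfl⟩, ⟨(true, none), rfl⟩, ⟨(false, some (i, false)), rfl⟩,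
      ⟨(false, some (i, true)), rfl⟩, ⟨(true, some (i, false)), rfl⟩, ⟨(true, some (i, true)), rfl⟩]

end Gn

theorem statement5_general (n : ℕ) :
    (∀ Z : Set (GVert n), IsIRSet (Gn n) Z ↔
      (Z = Xbase n ∨ Z = Ybase n ∨
        ∃ i : Fin n, Z = XiSet n i ∨ Z = XiSet' n i ∨ Z = YiSet n i ∨ Z = YiSet' n i)) ∧
    {Z : Set (GVert n) | IsIRSet (Gn n) Z}.ncard = 4 * n + 2 := by
  have hrange : {Z | IsIRSet (Gn n) Z} = Set.range Gn.irSet :=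
    Set.ext Gn.isIRSet_iff_mem_range_irSet
  refine ⟨fun Z => (Gn.isIRSet_iff_mem_range_irSet Z).trans Gn.mem_range_irSet_iff, ?_⟩
  rw [hrange, Set.ncard_range_of_injective Gn.irSet_injective, Nat.card_eq_fintype_card]
  simp only [Fintype.card_prod, Fintype.card_bool, Fintype.card_option, Fintype.card_fin]
  ring

/-- For every `n ≥ 1`, the `IR(Gₙ)`-sets are precisely the `4n + 2` sets
`X`, `Xᵢ`, `Xᵢ'`, `Y`, `Yᵢ`, `Yᵢ'`. -/
theorem statement5 (n : ℕ) (hn : 1 ≤ n) :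
    (∀ Z : Set (GVert n), IsIRSet (Gn n) Z ↔
      (Z = Xbase n ∨ Z = Ybase n ∨
        ∃ i : Fin n, Z = XiSet n i ∨ Z = XiSet' n i ∨ Z = YiSet n i ∨ Z = YiSet' n i)) ∧
    {Z : Set (GVert n) | IsIRSet (Gn n) Z}.ncard = 4 * n + 2 :=
  statement5_general n
end

section
/- For every integer n ≥ 1, if Z is an IR(G_n)-set with u ∈ Z, then Z ∩ B = ∅ and |Z ∩ A| ≤ 1. -/
open SimpleGraph

/-! The set `{u} ∪ C ∪ D` is independent, so `IR(Gₙ) ≥ 2n + 1`. When `u ∈ Z`, a vertex `cᵢ`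
or `dᵢ` of `Z` cannot have `aᵢ` as private neighbour, since `u` dominates it; hence `Z` meets
every `Sᵢ` in at most two vertices and `|Z| ≤ |Z ∩ {u, v}| + 2n` leaves a deficit of at most one.
If `v ∈ Z`, the private neighbours `aᵢ` of `u` and `bⱼ` of `v` cost two, so `v ∉ Z` and `Z` meets
every `Sᵢ` in exactly two vertices. The private neighbour of `u` is then `u` (so `Z ∩ A = ∅`, and
`bᵢ ∈ Z` would exclude `aᵢ, cᵢ, dᵢ`) or `v` (so `Z ∩ B = ∅`, and `aᵢ, aⱼ ∈ Z` with `i ≠ j` would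
exclude `bᵢ, cᵢ, dᵢ`), but not some `aᵢ`, which would exclude `aᵢ, cᵢ, dᵢ`. -/

section Irredundance

variable {V : Type*} {G : SimpleGraph V} {D : Set V} {x w y : V}

lemma IsPrivateNbr.notMem (h : IsPrivateNbr G D x w) (hwx : w ≠ x) : w ∉ D :=
  fun hw => h.2 w hw hwx (Or.inl rfl)

lemma IsPrivateNbr.notMem_of_adj (h : IsPrivateNbr G D x w) (hyx : y ≠ x) (hyw : G.Adj y w) :
    y ∉ D :=
  fun hy => h.2 y hy hyx (Or.inr hyw)

lemma SimpleGraph.IsIndepSet.irredundant (h : G.IsIndepSet D) : Irredundant G D :=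
  fun z hz => ⟨z, Or.inl rfl, fun _ hy hyz hdom =>
    hdom.elim (fun hzy => hyz hzy.symm) (h hy hz hyz)⟩

lemma Irredundant.ncard_le_IRnum [Finite V] (h : Irredundant G D) : D.ncard ≤ IRnum G :=
  le_csSup ⟨Nat.card V, by rintro _ ⟨D', -, rfl⟩; exact Set.ncard_le_card D'⟩ ⟨D, h, rfl⟩

end Irredundance

lemma sum_add_sum_tsub_le_mul_card {ι : Type*} [Fintype ι] {f : ι → ℕ} {m : ℕ}
    (hf : ∀ i, f i ≤ m) (s : Finset ι) :
    ∑ i, f i + ∑ i ∈ s, (m - f i) ≤ m * Fintype.card ι := by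
  calc ∑ i, f i + ∑ i ∈ s, (m - f i) ≤ ∑ i, f i + ∑ i, (m - f i) := by
        gcongr; exact s.subset_univ
    _ = ∑ _i : ι, m := by
        rw [← Finset.sum_add_distrib]
        exact Finset.sum_congr rfl fun i _ => Nat.add_sub_cancel' (hf i)
    _ = m * Fintype.card ι := by simp [mul_comm]

namespace Gn

open GVert

variable {n : ℕ}

lemma adj_u_iff {x : GVert n} : (Gn n).Adj u x ↔ x = v ∨ ∃ i, x = a i := by
  cases x <;> simp [Gn]

lemma adj_v_iff {x : GVert n} : (Gn n).Adj v x ↔ x = u ∨ ∃ i, x = b i := by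
  cases x <;> simp [Gn]

lemma adj_iff_of_side {i : Fin n} {x w : GVert n} (hx : x = c i ∨ x = d i) :
    (Gn n).Adj x w ↔ w = a i ∨ w = b i := by
  rcases hx with rfl | rfl <;> cases w <;> simp [Gn, eq_comm]

lemma two_mul_add_one_le_IRnum : 2 * n + 1 ≤ IRnum (Gn n) := by
  let f : Option (Fin n ⊕ Fin n) → GVert n := fun o => o.elim u (Sum.elim c d)
  have hf : Function.Injective f := by
    rintro (_ | _ | _) (_ | _ | _) h <;> simp_all [f]
  have hindep : (Gn n).IsIndepSet (Set.range f) := by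
    rintro _ ⟨(_ | _ | _), rfl⟩ _ ⟨(_ | _ | _), rfl⟩ <;> simp [f, Gn]
  calc 2 * n + 1 = (Set.range f).ncard := by
        rw [Set.ncard_range_of_injective hf]; simp [two_mul]
    _ ≤ IRnum (Gn n) := hindep.irredundant.ncard_le_IRnum

lemma ncard_le_ncard_inter_uv_add_sum (Z : Set (GVert n)) :
    Z.ncard ≤ (Z ∩ {u, v}).ncard + ∑ k, (Z ∩ Sset n k).ncard := by
  have hcover : Z ⊆ (Z ∩ {u, v}) ∪ ⋃ k, Z ∩ Sset n k := by
    intro x hx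
    cases x <;> simp [hx, Sset]
  calc Z.ncard ≤ ((Z ∩ {u, v}) ∪ ⋃ k, Z ∩ Sset n k).ncard := Set.ncard_le_ncard hcover
    _ ≤ (Z ∩ {u, v}).ncard + (⋃ k, Z ∩ Sset n k).ncard := Set.ncard_union_le _ _
    _ ≤ _ := by gcongr; exact Set.ncard_iUnion_le_of_fintype _

open Classical in
lemma ncard_inter_Sset (Z : Set (GVert n)) (k : Fin n) :
    (Z ∩ Sset n k).ncard = (if a k ∈ Z then 1 else 0) + (if b k ∈ Z then 1 else 0) +
      (if c k ∈ Z then 1 else 0) + (if d k ∈ Z then 1 else 0) := by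
  simp only [Sset, Set.inter_comm Z]
  by_cases ha : a k ∈ Z <;> by_cases hb : b k ∈ Z <;> by_cases hc : c k ∈ Z <;>
    by_cases hd : d k ∈ Z <;>
    simp [Set.insert_inter_of_mem, Set.insert_inter_of_notMem, Set.ncard_insert_of_notMem, *]

variable {Z : Set (GVert n)}

/-- The third candidate private neighbour `aᵢ` of `x` is dominated by `u`. -/
lemma side_notMem (hZ : Irredundant (Gn n) Z) (hu : u ∈ Z) {i : Fin n} {x : GVert n}
    (hx : x = c i ∨ x = d i) (hxdom : a i ∈ Z ∨ b i ∈ Z)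
    (hbdom : ∃ y ∈ Z, y ≠ x ∧ (b i = y ∨ (Gn n).Adj y (b i))) : x ∉ Z := by
  intro hxZ
  obtain ⟨w, hw⟩ := hZ x hxZ
  rcases hw.1 with rfl | hadj
  · have hadj_a : (Gn n).Adj (a i) w := ((adj_iff_of_side hx).2 (Or.inl rfl)).symm
    have hadj_b : (Gn n).Adj (b i) w := ((adj_iff_of_side hx).2 (Or.inr rfl)).symm
    rcases hxdom with h | h
    · exact hw.notMem_of_adj hadj_a.ne hadj_a h
    · exact hw.notMem_of_adj hadj_b.ne hadj_b h
  · have hux : u ≠ x := by rcases hx with rfl | rfl <;> simp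
    rcases (adj_iff_of_side hx).1 hadj with rfl | rfl
    · exact hw.notMem_of_adj hux (by simp [Gn]) hu
    · obtain ⟨y, hy, hyx, hdom⟩ := hbdom
      exact hw.2 y hy hyx hdom

lemma ncard_inter_Sset_le_two (hZ : Irredundant (Gn n) Z) (hu : u ∈ Z) (k : Fin n) :
    (Z ∩ Sset n k).ncard ≤ 2 := by
  have hb : b k ∈ Z → c k ∉ Z ∧ d k ∉ Z := fun hb =>
    ⟨side_notMem hZ hu (Or.inl rfl) (Or.inr hb) ⟨b k, hb, by simp, Or.inl rfl⟩,
      side_notMem hZ hu (Or.inr rfl) (Or.inr hb) ⟨b k, hb, by simp, Or.inl rfl⟩⟩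
  have hacd : a k ∈ Z → d k ∈ Z → c k ∉ Z := fun ha hd =>
    side_notMem hZ hu (Or.inl rfl) (Or.inl ha) ⟨d k, hd, by simp, Or.inr (by simp [Gn])⟩
  rw [ncard_inter_Sset]
  split_ifs <;> simp_all

lemma ncard_inter_Sset_le_one {k : Fin n} (hc : c k ∉ Z) (hd : d k ∉ Z)
    (hab : a k ∉ Z ∨ b k ∉ Z) : (Z ∩ Sset n k).ncard ≤ 1 := by
  rw [ncard_inter_Sset]
  rcases hab with h | h <;> split_ifs <;> simp_all

lemma sum_two_sub_ncard_inter_Sset_lt (hZ : IsIRSet (Gn n) Z) (hu : u ∈ Z)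
    (s : Finset (Fin n)) : ∑ k ∈ s, (2 - (Z ∩ Sset n k).ncard) < (Z ∩ {u, v}).ncard := by
  have hbig : 2 * n + 1 ≤ Z.ncard := hZ.2 ▸ two_mul_add_one_le_IRnum
  have hsum := sum_add_sum_tsub_le_mul_card (ncard_inter_Sset_le_two hZ.1 hu) s
  have hcount := ncard_le_ncard_inter_uv_add_sum Z
  rw [Fintype.card_fin] at hsum
  omega

lemma v_notMem (hZ : IsIRSet (Gn n) Z) (hu : u ∈ Z) : v ∉ Z := by
  intro hv
  obtain ⟨w, hw⟩ := hZ.1 u hu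
  obtain ⟨w', hw'⟩ := hZ.1 v hv
  obtain ⟨i, rfl⟩ : ∃ i, w = a i := by
    rcases hw.1 with rfl | h
    · exact absurd hv (hw.notMem_of_adj (by simp) (by simp [Gn]))
    · rcases adj_u_iff.1 h with rfl | h
      · exact absurd hv (hw.notMem (by simp))
      · exact h
  obtain ⟨j, rfl⟩ : ∃ j, w' = b j := by
    rcases hw'.1 with rfl | h
    · exact absurd hu (hw'.notMem_of_adj (by simp) (by simp [Gn]))
    · rcases adj_v_iff.1 h with rfl | h
      · exact absurd hu (hw'.notMem (by simp))
      · exact h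
  have hai : a i ∉ Z := hw.notMem (by simp)
  have hci : c i ∉ Z := hw.notMem_of_adj (by simp) (by simp [Gn])
  have hdi : d i ∉ Z := hw.notMem_of_adj (by simp) (by simp [Gn])
  have hbj : b j ∉ Z := hw'.notMem (by simp)
  have hcj : c j ∉ Z := hw'.notMem_of_adj (by simp) (by simp [Gn])
  have hdj : d j ∉ Z := hw'.notMem_of_adj (by simp) (by simp [Gn])
  have hdeficit := sum_two_sub_ncard_inter_Sset_lt hZ hu {i, j}
  have huv : (Z ∩ {u, v}).ncard ≤ 2 :=
    (Set.ncard_inter_le_ncard_right _ _).trans (Set.ncard_pair (by simp)).le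
  rcases eq_or_ne i j with rfl | hij
  · simp [ncard_inter_Sset, *] at hdeficit
    omega
  · have hi := ncard_inter_Sset_le_one hci hdi (Or.inl hai)
    have hj := ncard_inter_Sset_le_one hcj hdj (Or.inr hbj)
    rw [Finset.sum_pair hij] at hdeficit
    omega

lemma two_le_ncard_inter_Sset (hZ : IsIRSet (Gn n) Z) (hu : u ∈ Z) (k : Fin n) :
    2 ≤ (Z ∩ Sset n k).ncard := by
  have hdeficit := sum_two_sub_ncard_inter_Sset_lt hZ hu {k}
  rw [Set.inter_insert_of_mem hu, Set.inter_singleton_eq_empty.2 (v_notMem hZ hu)] at hdeficit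
  simp at hdeficit
  omega

lemma b_notMem_of_a_notMem (hZ : IsIRSet (Gn n) Z) (hu : u ∈ Z) {k : Fin n} (ha : a k ∉ Z) :
    b k ∉ Z := by
  intro hb
  have hc := side_notMem hZ.1 hu (Or.inl rfl) (Or.inr hb) ⟨b k, hb, by simp, Or.inl rfl⟩
  have hd := side_notMem hZ.1 hu (Or.inr rfl) (Or.inr hb) ⟨b k, hb, by simp, Or.inl rfl⟩
  have := ncard_inter_Sset_le_one hc hd (Or.inl ha)
  have := two_le_ncard_inter_Sset hZ hu k
  omega

lemma eq_of_a_mem (hZ : IsIRSet (Gn n) Z) (hu : u ∈ Z) {i j : Fin n} (hb : b i ∉ Z)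
    (hai : a i ∈ Z) (haj : a j ∈ Z) : i = j := by
  by_contra hij
  have hc := side_notMem hZ.1 hu (Or.inl rfl) (Or.inl hai)
    ⟨a j, haj, by simp, Or.inr (by simp [Gn, Ne.symm hij])⟩
  have hd := side_notMem hZ.1 hu (Or.inr rfl) (Or.inl hai)
    ⟨a j, haj, by simp, Or.inr (by simp [Gn, Ne.symm hij])⟩
  have := ncard_inter_Sset_le_one hc hd (Or.inr hb)
  have := two_le_ncard_inter_Sset hZ hu i
  omega

lemma not_isPrivateNbr_u_a (hZ : IsIRSet (Gn n) Z) (hu : u ∈ Z) (i : Fin n) :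
    ¬IsPrivateNbr (Gn n) Z u (a i) := by
  intro hw
  have ha : a i ∉ Z := hw.notMem (by simp)
  have hc : c i ∉ Z := hw.notMem_of_adj (by simp) (by simp [Gn])
  have hd : d i ∉ Z := hw.notMem_of_adj (by simp) (by simp [Gn])
  have := ncard_inter_Sset_le_one hc hd (Or.inl ha)
  have := two_le_ncard_inter_Sset hZ hu i
  omega

end Gn

theorem statement6_general (n : ℕ) (Z : Set (GVert n))
    (hZ : IsIRSet (Gn n) Z) (hu : GVert.u ∈ Z) :
    Z ∩ {x | ∃ i, x = GVert.b i} = ∅ ∧ (Z ∩ {x | ∃ i, x = GVert.a i}).ncard ≤ 1 := by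
  obtain ⟨w, hw⟩ := hZ.1 .u hu
  rcases hw.1 with rfl | hadj
  · have hA : ∀ k, .a k ∉ Z := fun k => hw.notMem_of_adj (by simp) (by simp [Gn])
    refine ⟨Set.eq_empty_of_forall_notMem ?_, ?_⟩
    · rintro _ ⟨hx, k, rfl⟩
      exact Gn.b_notMem_of_a_notMem hZ hu (hA k) hx
    · have hAZ : Z ∩ {x | ∃ i, x = .a i} = ∅ :=
        Set.eq_empty_of_forall_notMem (by rintro _ ⟨hx, k, rfl⟩; exact hA k hx)
      simp [hAZ]
  rcases Gn.adj_u_iff.1 hadj with rfl | ⟨i, rfl⟩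
  · have hB : ∀ k, .b k ∉ Z := fun k => hw.notMem_of_adj (by simp) (by simp [Gn])
    refine ⟨Set.eq_empty_of_forall_notMem (by rintro _ ⟨hx, k, rfl⟩; exact hB k hx), ?_⟩
    rw [Set.ncard_le_one]
    rintro _ ⟨hx, i, rfl⟩ _ ⟨hy, j, rfl⟩
    rw [Gn.eq_of_a_mem hZ hu (hB i) hx hy]
  · exact absurd hw (Gn.not_isPrivateNbr_u_a hZ hu i)

/-- For every `n ≥ 1`, if `Z` is an `IR(Gₙ)`-set with `u ∈ Z`, then
`Z ∩ B = ∅` and `|Z ∩ A| ≤ 1`. -/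
theorem statement6 (n : ℕ) (hn : 1 ≤ n) (Z : Set (GVert n))
    (hZ : IsIRSet (Gn n) Z) (hu : GVert.u ∈ Z) :
    Z ∩ {x | ∃ i, x = GVert.b i} = ∅ ∧ (Z ∩ {x | ∃ i, x = GVert.a i}).ncard ≤ 1 :=
  statement6_general n Z hZ hu
end
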